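/- arXiv:1911.06198 — 2 statements merged into one kernel-verified Lean document; each statement's English description precedes it below -/
import Mathlib

section
/- Let N be a set of n elements and X a collection of g subsets of N with n > g ≥ h ≥ 1 and n² − h − 1 ≥ 1. Construct the election instance with two candidates c_0, c_1: a node v_1 with score vector ⟨1,0⟩, a seed sending the message (+1 on c_0, −1 on c_1); a node v_2 with score vector ⟨1,0⟩, a seed sending the message (−1 on c_0); an edge from v_1 to v_2; a directed line L_1 of n²−h−1 nodes with score vector ⟨1,0⟩, whose first node is a seed sending the message (+1 on c_1); an edge from v_2 to the first node of L_1; for each x ∈ X a node v_x with score vector ⟨1,0⟩ and an edge from the last node of L_1 to v_x; for each z ∈ N a directed line L_z of n nodes with score vector ⟨0,1⟩, with an edge from v_x to the first node of L_z whenever z ∈ x; and g−h+1 isolated nodes with score vector ⟨0,1⟩. All edges are deterministic except an additional edge from v_1 to the first node of L_1 which has probability 1/2: let H_1 be the live graph containing this edge and H_2 the live graph without it. Then there exists E' ⊆ E with (ΔMoV^-(E',H_1) + ΔMoV^-(E',H_2))/2 > 0 if and only if there exists X* ⊆ X with |X*| ≤ h and ⋃_{x∈X*} x = N. -/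
open scoped Classical

noncomputable section

/-- `v` is reachable from `s` through the edge set `Es` (every node reaches itself). -/
def Reaches {V : Type*} (Es : Set (V × V)) (s v : V) : Prop :=
  Relation.ReflTransGen (fun a b => (a, b) ∈ Es) s v

/-- The set of influenced voters: those reachable from some seed in `S`. -/
def influenced {V : Type*} [Fintype V] (Es : Set (V × V)) (S : Set V) : Finset V :=
  Finset.univ.filter (fun v => ∃ s ∈ S, Reaches Es s v)

/-- χ(S,E): the number of influenced voters. -/
def chi {V : Type*} [Fintype V] (Es : Set (V × V)) (S : Set V) : ℕ :=
  (influenced Es S).card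

/-- The tie-breaking constant ε = 1/(1 + max_{v,i} π_v(i)). -/
def eps {V : Type*} [Fintype V] {k : ℕ} (π : V → Fin k → ℕ) : ℚ :=
  1 / (1 + ((Finset.univ.sup fun v => Finset.univ.sup fun i => π v i : ℕ) : ℚ))

/-- The final score π*_v(i) = (1-ε)·π_v(i) + Σ_{s ∈ S, v reachable from s} m_s(i). -/
def finalScore {V : Type*} [Fintype V] {k : ℕ} (Es : Set (V × V)) (π : V → Fin k → ℕ)
    (S : Set V) (m : V → Fin k → ℤ) (v : V) (i : Fin k) : ℚ :=
  (1 - eps π) * (π v i : ℚ) +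
    ∑ s ∈ Finset.univ.filter (fun s => s ∈ S ∧ Reaches Es s v), (m s i : ℚ)

/-- V_c: voters whose initial score vector has a strict maximum at `c`. -/
def initVoters {V : Type*} [Fintype V] {k : ℕ} (π : V → Fin k → ℕ) (c : Fin k) : Finset V :=
  Finset.univ.filter (fun v => ∀ j, j ≠ c → π v j < π v c)

/-- V*_c: voters whose final score vector has a strict maximum at `c`. -/
def finalVoters {V : Type*} [Fintype V] {k : ℕ} (Es : Set (V × V)) (π : V → Fin k → ℕ)
    (S : Set V) (m : V → Fin k → ℤ) (c : Fin k) : Finset V :=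
  Finset.univ.filter (fun v => ∀ j, j ≠ c →
    finalScore Es π S m v j < finalScore Es π S m v c)

/-- MoV(S,M,E) = |V*_{c_0}| − max_{c ≠ c_0} |V*_c|. -/
def MoV {V : Type*} [Fintype V] {k : ℕ} [NeZero k] (Es : Set (V × V)) (π : V → Fin k → ℕ)
    (S : Set V) (m : V → Fin k → ℤ) : ℤ :=
  ((finalVoters Es π S m 0).card : ℤ) -
    (((Finset.univ.erase (0 : Fin k)).sup fun c => (finalVoters Es π S m c).card : ℕ) : ℤ)

/-- |M|: the total budget used by seed set `S` with messages `m`. -/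
def totalBudget {V : Type*} [Fintype V] {k : ℕ} (S : Set V) (m : V → Fin k → ℤ) : ℕ :=
  ∑ s ∈ Finset.univ.filter (fun s => s ∈ S), ∑ i, (m s i).natAbs

end

section EdgeRemovalSetCover

variable (α : Type*) (n g h : ℕ)

/-- Voters: v₁ (`false`) and v₂ (`true`), the line L₁ of n²−h−1 nodes, a node `v_x` for
each set of the collection, a line L_z of n nodes for each element `z`, and g−h+1 isolated
nodes. -/
abbrev ERVoter :=
  Bool ⊕ (Fin (n ^ 2 - h - 1) ⊕ (Fin g ⊕ ((α × Fin n) ⊕ Fin (g - h + 1))))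

variable {α n g h}

/-- The live graph H₂ (the stochastic edge from v₁ to the first node of L₁ is absent):
an edge from v₁ to v₂, an edge from v₂ to the first node of L₁, L₁ a directed line, an edge
from the last node of L₁ to each `v_x`, an edge from `v_x` to the first node of L_z whenever
`z ∈ x`, and each L_z a directed line. -/
def EREdgesH2 (X : Fin g → Finset α) : Set (ERVoter α n g h × ERVoter α n g h) :=
  { p | (p.1 = Sum.inl false ∧ p.2 = Sum.inl true) ∨
        (∃ j : Fin (n ^ 2 - h - 1), (j : ℕ) = 0 ∧
          p.1 = Sum.inl true ∧ p.2 = Sum.inr (Sum.inl j)) ∨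
        (∃ i j : Fin (n ^ 2 - h - 1), (i : ℕ) + 1 = (j : ℕ) ∧
          p.1 = Sum.inr (Sum.inl i) ∧ p.2 = Sum.inr (Sum.inl j)) ∨
        (∃ (i : Fin (n ^ 2 - h - 1)) (x : Fin g), (i : ℕ) + 1 = n ^ 2 - h - 1 ∧
          p.1 = Sum.inr (Sum.inl i) ∧ p.2 = Sum.inr (Sum.inr (Sum.inl x))) ∨
        (∃ (x : Fin g) (z : α) (j : Fin n), z ∈ X x ∧ (j : ℕ) = 0 ∧
          p.1 = Sum.inr (Sum.inr (Sum.inl x)) ∧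
          p.2 = Sum.inr (Sum.inr (Sum.inr (Sum.inl (z, j))))) ∨
        (∃ (z : α) (i j : Fin n), (i : ℕ) + 1 = (j : ℕ) ∧
          p.1 = Sum.inr (Sum.inr (Sum.inr (Sum.inl (z, i)))) ∧
          p.2 = Sum.inr (Sum.inr (Sum.inr (Sum.inl (z, j))))) }

/-- The live graph H₁: H₂ together with the stochastic edge from v₁ to the first node
of L₁. -/
def EREdgesH1 (X : Fin g → Finset α) : Set (ERVoter α n g h × ERVoter α n g h) :=
  EREdgesH2 X ∪
    { p | ∃ j : Fin (n ^ 2 - h - 1), (j : ℕ) = 0 ∧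
        p.1 = Sum.inl false ∧ p.2 = Sum.inr (Sum.inl j) }

/-- Scores: v₁, v₂, L₁ and the `v_x` have ⟨1,0⟩; the L_z and the isolated nodes have
⟨0,1⟩. -/
def ERScores : ERVoter α n g h → Fin 2 → ℕ
  | Sum.inl _ => ![1, 0]
  | Sum.inr (Sum.inl _) => ![1, 0]
  | Sum.inr (Sum.inr (Sum.inl _)) => ![1, 0]
  | Sum.inr (Sum.inr (Sum.inr _)) => ![0, 1]

/-- Seeds: v₁, v₂ and the first node of L₁. -/
def ERSeeds : Set (ERVoter α n g h) :=
  { v | v = Sum.inl false ∨ v = Sum.inl true ∨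
    ∃ j : Fin (n ^ 2 - h - 1), (j : ℕ) = 0 ∧ v = Sum.inr (Sum.inl j) }

/-- Messages: v₁ sends (+1 on c₀, −1 on c₁); v₂ sends (−1 on c₀); the first node of L₁
sends (+1 on c₁). -/
def ERMsg : ERVoter α n g h → Fin 2 → ℤ
  | Sum.inl false => ![1, -1]
  | Sum.inl true => ![-1, 0]
  | Sum.inr (Sum.inl _) => ![0, 1]
  | _ => ![0, 0]

/-!
Here ε = 1/2, and the voters split into "top" ones starting at ⟨1,0⟩ (v₁, v₂, L₁ and the v_x,
i.e. `ERScores v 1 = 0`) and "bottom" ones starting at ⟨0,1⟩. Writing u₀ for the first node of L₁,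
π*_v(0) − π*_v(1) = bias v + 1/2 with the integer
bias v = 2[v₁ ⇝ v] − [v₂ ⇝ v] − [u₀ ⇝ v] − [v bottom], so there are no ties,
MoV = 2|V*_{c₀}| − |V|, and everything reduces to counting c₀-voters. In H₁ and H₂ these are
exactly the 2 + (n² − h − 1) + g top voters.

Given a cover J with |J| ≤ h, cut v₂ → u₀ and the edges from the end of L₁ to v_x for x ∉ J. In H₁
every node of every L_z now votes c₀ (gain n²); in H₂ the nodes of L₁ and the v_x with x ∈ J switch
to c₁ (loss n² − h − 1 + |J|).

Conversely, a bottom voter can vote c₀ only if v₁ reaches it and v₂ does not. In H₁ ∖ E' this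
forces E' to keep all of L₁ and to cut v₂ → u₀, and then in H₂ ∖ E' all of L₁ and every v_x still
attached to L₁ (the set J) vote c₁. The gain in H₁ is at most n·|⋃_{x ∈ J} x|, the loss in H₂ at
least n² − h − 1 + |J|, and since h < n a positive balance forces |J| ≤ h and ⋃_{x ∈ J} x = N.
-/

theorem Relation.ReflTransGen.exists_notMem_rel_mem {β : Type*} {r : β → β → Prop} {T : Set β}
    {a b : β} (hab : Relation.ReflTransGen r a b) (ha : a ∉ T) (hb : b ∈ T) :
    ∃ x ∉ T, ∃ y ∈ T, Relation.ReflTransGen r a x ∧ r x y := by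
  induction hab with
  | refl => exact absurd hb ha
  | @tail c d hac hcd ih =>
    by_cases hc : c ∈ T
    · exact ih hc
    · exact ⟨c, hc, d, hb, hac, hcd⟩

theorem Fin.reflTransGen_of_succ {β : Type*} {m : ℕ} {r : β → β → Prop} (f : Fin m → β)
    (hf : ∀ i j : Fin m, (i : ℕ) + 1 = j → r (f i) (f j)) {i j : Fin m} (hij : i ≤ j) :
    Relation.ReflTransGen r (f i) (f j) := by
  obtain ⟨k, hk⟩ := Nat.exists_eq_add_of_le (Fin.le_def.1 hij)
  induction k generalizing j with
  | zero => rw [Fin.ext hk]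
  | succ k ih =>
    have hk' : (i : ℕ) + k < m := by omega
    exact (ih (j := ⟨i + k, hk'⟩) (Fin.le_def.2 (by simp)) rfl).tail
      (hf _ _ (by simp [hk]; omega))

theorem MoV_eq_two_mul_card_sub {V : Type*} [Fintype V] (Es : Set (V × V)) (π : V → Fin 2 → ℕ)
    (S : Set V) (m : V → Fin 2 → ℤ)
    (hne : ∀ v, finalScore Es π S m v 0 ≠ finalScore Es π S m v 1) :
    MoV Es π S m = 2 * (finalVoters Es π S m 0).card - Fintype.card V := by
  have hcompl : finalVoters Es π S m 1 = (finalVoters Es π S m 0)ᶜ := by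
    ext v
    simp only [finalVoters, Finset.mem_compl, Finset.mem_filter, Finset.mem_univ, true_and,
      Fin.forall_fin_two, ne_eq, not_true_eq_false, IsEmpty.forall_iff, and_true, zero_ne_one,
      one_ne_zero, not_false_eq_true, forall_const, not_lt]
    exact ⟨le_of_lt, fun h => lt_of_le_of_ne h (hne v)⟩
  have hsup : (Finset.univ.erase (0 : Fin 2)) = {1} := by decide
  rw [MoV, hsup, Finset.sup_singleton, hcompl, Finset.card_compl,
    Nat.cast_sub (Finset.card_le_univ _)]
  ring

theorem le_and_eq_of_sq_sub_add_lt_mul {c n h j : ℕ} (hc : c ≤ n) (hhn : h < n)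
    (hlt : n ^ 2 - h - 1 + j < c * n) : j ≤ h ∧ c = n := by
  have hcn : c * n ≤ n ^ 2 := by nlinarith
  have hh : h + 1 ≤ n ^ 2 := by nlinarith
  refine ⟨by omega, le_antisymm hc (by_contra fun hcn' => ?_)⟩
  have : c * n + n ≤ n ^ 2 := by nlinarith
  omega

namespace ER

open Finset

abbrev v₁ : ERVoter α n g h := Sum.inl false
abbrev v₂ : ERVoter α n g h := Sum.inl true
abbrev line (i : Fin (n ^ 2 - h - 1)) : ERVoter α n g h := Sum.inr (Sum.inl i)
abbrev setNode (x : Fin g) : ERVoter α n g h := Sum.inr (Sum.inr (Sum.inl x))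
abbrev elem (z : α) (j : Fin n) : ERVoter α n g h := Sum.inr (Sum.inr (Sum.inr (Sum.inl (z, j))))
abbrev isolated (k : Fin (g - h + 1)) : ERVoter α n g h := Sum.inr (Sum.inr (Sum.inr (Sum.inr k)))

variable (hL : 0 < n ^ 2 - h - 1)

abbrev u₀ : ERVoter α n g h := line ⟨0, hL⟩
abbrev lastLine : ERVoter α n g h := line ⟨n ^ 2 - h - 1 - 1, by omega⟩

variable {X : Fin g → Finset α} {a b : ERVoter α n g h}

theorem EREdgesH2_subset_EREdgesH1 : EREdgesH2 X ⊆ (EREdgesH1 X : Set (ERVoter α n g h × _)) :=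
  Set.subset_union_left

theorem v₁_v₂_mem_H2 : (v₁, v₂) ∈ (EREdgesH2 X : Set (ERVoter α n g h × _)) := Or.inl ⟨rfl, rfl⟩

theorem v₂_u₀_mem_H2 : (v₂, u₀ hL) ∈ (EREdgesH2 X : Set (ERVoter α n g h × _)) :=
  Or.inr (Or.inl ⟨_, rfl, rfl, rfl⟩)

theorem v₁_u₀_mem_H1 : (v₁, u₀ hL) ∈ (EREdgesH1 X : Set (ERVoter α n g h × _)) :=
  Or.inr ⟨_, rfl, rfl, rfl⟩

theorem line_mem_H2 {i j : Fin (n ^ 2 - h - 1)} (hij : (i : ℕ) + 1 = j) :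
    (line i, line j) ∈ (EREdgesH2 X : Set (ERVoter α n g h × _)) :=
  Or.inr (Or.inr (Or.inl ⟨i, j, hij, rfl, rfl⟩))

theorem lastLine_setNode_mem_H2 (x : Fin g) :
    (lastLine hL, setNode x) ∈ (EREdgesH2 X : Set (ERVoter α n g h × _)) :=
  Or.inr (Or.inr (Or.inr (Or.inl ⟨_, x, by simp; omega, rfl, rfl⟩)))

theorem setNode_elem_mem_H2 {x : Fin g} {z : α} (hz : z ∈ X x) {j : Fin n} (hj : (j : ℕ) = 0) :
    (setNode x, elem z j) ∈ (EREdgesH2 X : Set (ERVoter α n g h × _)) :=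
  Or.inr (Or.inr (Or.inr (Or.inr (Or.inl ⟨x, z, j, hz, hj, rfl, rfl⟩))))

theorem elem_mem_H2 {z : α} {i j : Fin n} (hij : (i : ℕ) + 1 = j) :
    (elem z i, elem z j) ∈ (EREdgesH2 X : Set (ERVoter α n g h × _)) :=
  Or.inr (Or.inr (Or.inr (Or.inr (Or.inr ⟨z, i, j, hij, rfl, rfl⟩))))

theorem eq_of_v₁_mem_H2 (hb : (v₁, b) ∈ EREdgesH2 X) : b = v₂ := by
  rcases hb with ⟨-, h2⟩ | ⟨_, _, h1, -⟩ | ⟨_, _, _, h1, -⟩ | ⟨_, _, _, h1, -⟩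
    | ⟨_, _, _, _, _, h1, -⟩ | ⟨_, _, _, _, h1, -⟩ <;> simp_all

theorem eq_of_v₁_mem_H1 (hb : (v₁, b) ∈ EREdgesH1 X) : b = v₂ ∨ b = u₀ hL := by
  rcases hb with hb | ⟨j, hj, -, rfl⟩
  · exact Or.inl (eq_of_v₁_mem_H2 hb)
  · exact Or.inr (by simp [Fin.ext_iff, hj])

theorem eq_of_v₂_mem_H1 (hb : (v₂, b) ∈ EREdgesH1 X) : b = u₀ hL := by
  rcases hb with (⟨h1, -⟩ | ⟨j, hj, -, rfl⟩ | ⟨_, _, _, h1, -⟩ | ⟨_, _, _, h1, -⟩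
    | ⟨_, _, _, _, _, h1, -⟩ | ⟨_, _, _, _, h1, -⟩) | ⟨_, _, h1, -⟩ <;>
    simp_all [Fin.ext_iff]

theorem notMem_H1_isolated {k : Fin (g - h + 1)} :
    (a, isolated k) ∉ (EREdgesH1 X : Set (ERVoter α n g h × _)) := by
  rintro ((⟨-, h2⟩ | ⟨_, _, -, h2⟩ | ⟨_, _, _, -, h2⟩ | ⟨_, _, _, -, h2⟩
    | ⟨_, _, _, _, _, -, h2⟩ | ⟨_, _, _, _, -, h2⟩) | ⟨_, _, -, h2⟩) <;> simp at h2

theorem eq_of_mem_H1_setNode {x : Fin g} (ha : (a, setNode x) ∈ EREdgesH1 X) :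
    a = lastLine hL := by
  rcases ha with (⟨-, h2⟩ | ⟨_, _, -, h2⟩ | ⟨_, _, _, -, h2⟩ | ⟨i, _, hi, rfl, h2⟩
    | ⟨_, _, _, _, _, -, h2⟩ | ⟨_, _, _, _, -, h2⟩) | ⟨_, _, -, h2⟩ <;>
    simp only [Sum.inr.injEq, Sum.inl.injEq, reduceCtorEq] at h2
  simp [Fin.ext_iff]; omega

theorem eq_of_mem_H1_line {j : Fin (n ^ 2 - h - 1)} (ha : (a, line j) ∈ EREdgesH1 X) :
    ((j : ℕ) = 0 ∧ (a = v₁ ∨ a = v₂)) ∨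
      ∃ i : Fin (n ^ 2 - h - 1), (i : ℕ) + 1 = j ∧ a = line i := by
  rcases ha with (⟨-, h2⟩ | ⟨_, hj, rfl, h2⟩ | ⟨i, _, hij, rfl, h2⟩ | ⟨_, _, _, -, h2⟩
    | ⟨_, _, _, _, _, -, h2⟩ | ⟨_, _, _, _, -, h2⟩) | ⟨_, hj, rfl, h2⟩ <;>
    simp only [Sum.inr.injEq, Sum.inl.injEq, reduceCtorEq] at h2 <;> subst h2 <;> simp_all

theorem eq_of_mem_H1_elem {z : α} {j : Fin n} (ha : (a, elem z j) ∈ EREdgesH1 X) :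
    ((j : ℕ) = 0 ∧ ∃ x, z ∈ X x ∧ a = setNode x) ∨ ∃ i : Fin n, (i : ℕ) + 1 = j ∧ a = elem z i := by
  rcases ha with (⟨-, h2⟩ | ⟨_, _, -, h2⟩ | ⟨_, _, _, -, h2⟩ | ⟨_, _, _, -, h2⟩
    | ⟨x, _, _, hz, hj, rfl, h2⟩ | ⟨_, i, _, hij, rfl, h2⟩) | ⟨_, _, -, h2⟩ <;>
    simp only [Sum.inr.injEq, Sum.inl.injEq, reduceCtorEq, Prod.mk.injEq] at h2
  · obtain ⟨rfl, rfl⟩ := h2; exact Or.inl ⟨hj, x, hz, rfl⟩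
  · obtain ⟨rfl, rfl⟩ := h2; exact Or.inr ⟨i, hij, rfl⟩

variable {F : Set (ERVoter α n g h × ERVoter α n g h)} {s w : ERVoter α n g h}

theorem eq_of_reaches_isolated (hF : F ⊆ EREdgesH1 X) {k : Fin (g - h + 1)}
    (hs : Reaches F s (isolated k)) : s = isolated k := by
  rcases hs.cases_tail with h | ⟨c, -, hc⟩
  · exact h.symm
  · exact absurd (hF hc) notMem_H1_isolated

theorem eq_or_mem_of_reaches_setNode (hF : F ⊆ EREdgesH1 X) {x : Fin g}
    (hs : Reaches F s (setNode x)) : s = setNode x ∨ (lastLine hL, setNode x) ∈ F := by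
  rcases hs.cases_tail with h | ⟨c, -, hc⟩
  · exact Or.inl h.symm
  · obtain rfl := eq_of_mem_H1_setNode hL (hF hc)
    exact Or.inr hc

theorem eq_or_reaches_u₀_of_reaches_v₂ (hF : F ⊆ EREdgesH1 X) (hw : Reaches F v₂ w) :
    w = v₂ ∨ ((v₂, u₀ hL) ∈ F ∧ Reaches F (u₀ hL) w) := by
  rcases hw.cases_head with h | ⟨c, hc, hcw⟩
  · exact Or.inl h.symm
  · obtain rfl := eq_of_v₂_mem_H1 hL (hF hc)
    exact Or.inr ⟨hc, hcw⟩

theorem eq_or_reaches_u₀_of_reaches_v₁ (hF : F ⊆ EREdgesH1 X) (hw : Reaches F v₁ w) :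
    w = v₁ ∨ w = v₂ ∨ Reaches F (u₀ hL) w := by
  rcases hw.cases_head with h | ⟨c, hc, hcw⟩
  · exact Or.inl h.symm
  · rcases eq_of_v₁_mem_H1 hL (hF hc) with rfl | rfl
    · rcases eq_or_reaches_u₀_of_reaches_v₂ hL hF hcw with h | ⟨-, h⟩
      exacts [Or.inr (Or.inl h), Or.inr (Or.inr h)]
    · exact Or.inr (Or.inr hcw)

theorem eq_or_reaches_v₂_of_reaches_v₁ (hF : F ⊆ EREdgesH2 X) (hw : Reaches F v₁ w) :
    w = v₁ ∨ Reaches F v₂ w := by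
  rcases hw.cases_head with h | ⟨c, hc, hcw⟩
  · exact Or.inl h.symm
  · obtain rfl := eq_of_v₁_mem_H2 (hF hc)
    exact Or.inr hcw

theorem exists_setNode_of_reaches_elem (hF : F ⊆ EREdgesH1 X) {z : α} {j : Fin n}
    (hw : Reaches F v₁ (elem z j)) :
    ∃ x, z ∈ X x ∧ (lastLine hL, setNode x) ∈ F ∧ Reaches F v₁ (lastLine hL) := by
  let T : Set (ERVoter α n g h) := {w | (∃ j, w = elem z j) ∨ ∃ x, z ∈ X x ∧ w = setNode x}
  obtain ⟨a, ha, b, hb, hva, hab⟩ :=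
    hw.exists_notMem_rel_mem (T := T) (by simp [T]) (Or.inl ⟨j, rfl⟩)
  rcases hb with ⟨j', rfl⟩ | ⟨x, hx, rfl⟩
  · rcases eq_of_mem_H1_elem (hF hab) with ⟨-, x, hx, rfl⟩ | ⟨i, -, rfl⟩
    · exact absurd (Or.inr ⟨x, hx, rfl⟩) ha
    · exact absurd (Or.inl ⟨i, rfl⟩) ha
  · obtain rfl := eq_of_mem_H1_setNode hL (hF hab)
    exact ⟨x, hx, hab, hva⟩

theorem line_mem_of_reaches_lastLine (hF : F ⊆ EREdgesH1 X) (hw : Reaches F v₁ (lastLine hL))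
    {i j : Fin (n ^ 2 - h - 1)} (hij : (i : ℕ) + 1 = j) : (line i, line j) ∈ F := by
  let T : Set (ERVoter α n g h) := {w | ∃ k : Fin (n ^ 2 - h - 1), (i : ℕ) < k ∧ w = line k}
  obtain ⟨a, ha, b, ⟨k, hik, rfl⟩, -, hab⟩ :=
    hw.exists_notMem_rel_mem (T := T) (by simp [T]) ⟨_, by simp; omega, rfl⟩
  rcases eq_of_mem_H1_line (hF hab) with ⟨hk, -⟩ | ⟨i', hi'k, rfl⟩
  · omega
  · have hi' : i' = i := Fin.ext (by_contra fun hne => ha ⟨i', by omega, rfl⟩)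
    have hk : k = j := Fin.ext (by omega)
    rwa [← hi', ← hk]

theorem reaches_u₀_line
    (hline : ∀ i j : Fin (n ^ 2 - h - 1), (i : ℕ) + 1 = j → (line i, line j) ∈ F)
    (i : Fin (n ^ 2 - h - 1)) : Reaches F (u₀ hL) (line i) :=
  Fin.reflTransGen_of_succ line hline (Fin.le_def.2 (Nat.zero_le _))

theorem reaches_elem (helem : ∀ (z : α) (i j : Fin n), (i : ℕ) + 1 = j → (elem z i, elem z j) ∈ F)
    (z : α) {i j : Fin n} (hij : i ≤ j) : Reaches F (elem z i) (elem z j) :=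
  Fin.reflTransGen_of_succ (elem z) (helem z) hij

def cutEdges (J : Finset (Fin g)) : Set (ERVoter α n g h × ERVoter α n g h) :=
  insert (v₂, u₀ hL) {p | ∃ x ∉ J, p = (lastLine hL, setNode x)}

theorem cutEdges_subset (J : Finset (Fin g)) :
    cutEdges hL J ⊆ (EREdgesH1 X : Set (ERVoter α n g h × _)) := by
  rintro p (rfl | ⟨x, -, rfl⟩)
  exacts [EREdgesH2_subset_EREdgesH1 (v₂_u₀_mem_H2 hL),
    EREdgesH2_subset_EREdgesH1 (lastLine_setNode_mem_H2 hL x)]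

theorem eq_v₂_of_reaches_v₂_of_diff_cutEdges {J : Finset (Fin g)}
    (hF : F ⊆ EREdgesH1 X \ cutEdges hL J)
    (hw : Reaches F v₂ w) : w = v₂ :=
  (eq_or_reaches_u₀_of_reaches_v₂ hL (hF.trans Set.sdiff_subset) hw).resolve_right
    fun h => (hF h.1).2 (Set.mem_insert _ _)

theorem ERScores_zero_add_one (v : ERVoter α n g h) : ERScores v 0 + ERScores v 1 = 1 := by
  rcases v with (_ | _) | (_ | _ | _ | _) <;> simp [ERScores]

theorem mem_ERSeeds_iff {s : ERVoter α n g h} : s ∈ ERSeeds ↔ s = v₁ ∨ s = v₂ ∨ s = u₀ hL := by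
  refine or_congr_right (or_congr_right ⟨?_, fun hs => ⟨_, rfl, hs⟩⟩)
  rintro ⟨j, hj, rfl⟩
  rw [Fin.ext (b := ⟨0, hL⟩) hj]

variable (F) in
noncomputable def bias (v : ERVoter α n g h) : ℤ :=
  2 * (if Reaches F v₁ v then 1 else 0) - (if Reaches F v₂ v then 1 else 0) -
    (if Reaches F (u₀ hL) v then 1 else 0) - ERScores v 1

variable [Fintype α]

theorem eps_ERScores : eps (ERScores : ERVoter α n g h → Fin 2 → ℕ) = 1 / 2 := by
  have hmax : (Finset.univ.sup fun v : ERVoter α n g h => Finset.univ.sup (ERScores v)) = 1 := by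
    refine le_antisymm (Finset.sup_le fun v _ => Finset.sup_le fun i _ => ?_) ?_
    · rcases v with (_ | _) | (_ | _ | _ | _) <;> fin_cases i <;> simp [ERScores]
    · exact le_sup_of_le (mem_univ v₁) (le_sup_of_le (mem_univ 0) le_rfl)
  rw [eps, hmax]
  norm_num

theorem finalScore_sub_eq_bias (v : ERVoter α n g h) :
    2 * (finalScore F ERScores ERSeeds ERMsg v 0 - finalScore F ERScores ERSeeds ERMsg v 1) =
      ((2 * bias hL F v + 1 : ℤ) : ℚ) := by
  have hseeds : Finset.univ.filter (fun s => s ∈ (ERSeeds : Set (ERVoter α n g h)) ∧ Reaches F s v)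
      = ({v₁, v₂, u₀ hL} : Finset (ERVoter α n g h)).filter (Reaches F · v) := by
    ext s
    simp [mem_ERSeeds_iff hL]
  have hπ : (ERScores v 0 : ℚ) = 1 - ERScores v 1 := by
    have := ERScores_zero_add_one v
    rw [eq_sub_iff_add_eq]; exact_mod_cast this
  simp only [finalScore, eps_ERScores, hseeds, Finset.sum_filter]
  rw [Finset.sum_insert (by simp), Finset.sum_insert (by simp), Finset.sum_singleton,
    Finset.sum_insert (by simp), Finset.sum_insert (by simp), Finset.sum_singleton]
  simp only [bias, ERMsg, hπ]
  split_ifs <;> push_cast <;> simp <;> ring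

variable (F) in
noncomputable abbrev voters₀ : Finset (ERVoter α n g h) := finalVoters F ERScores ERSeeds ERMsg 0

theorem mem_voters₀_iff {v : ERVoter α n g h} : v ∈ voters₀ F ↔ 0 ≤ bias hL F v := by
  have h := finalScore_sub_eq_bias hL (F := F) v
  simp only [finalVoters, Finset.mem_filter, Finset.mem_univ, true_and, Fin.forall_fin_two,
    ne_eq, not_true_eq_false, IsEmpty.forall_iff, one_ne_zero, not_false_eq_true, forall_const]
  rw [← sub_pos, ← mul_pos_iff_of_pos_left two_pos, h, Int.cast_pos]
  omega

theorem MoV_eq_two_mul_card_voters₀_sub (hL : 0 < n ^ 2 - h - 1)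
    (F : Set (ERVoter α n g h × ERVoter α n g h)) :
    MoV F ERScores ERSeeds ERMsg = 2 * #(voters₀ F) - Fintype.card (ERVoter α n g h) :=
  MoV_eq_two_mul_card_sub _ _ _ _ fun v heq => by
    have h := finalScore_sub_eq_bias hL (F := F) v
    rw [heq, sub_self, mul_zero, eq_comm, Int.cast_eq_zero] at h
    omega

theorem mem_voters₀_of_reaches_v₁ (hL : 0 < n ^ 2 - h - 1) {v : ERVoter α n g h}
    (htop : ERScores v 1 = 0) (hA : Reaches F v₁ v) : v ∈ voters₀ F := by
  rw [mem_voters₀_iff hL, bias, htop, if_pos hA]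
  split_ifs <;> simp

theorem mem_voters₀_of_not_reaches {v : ERVoter α n g h} (htop : ERScores v 1 = 0)
    (hB : ¬ Reaches F v₂ v) (hC : ¬ Reaches F (u₀ hL) v) : v ∈ voters₀ F := by
  rw [mem_voters₀_iff hL, bias, htop, if_neg hB, if_neg hC]
  split_ifs <;> simp

theorem mem_voters₀_of_reaches_v₁_of_not_reaches_v₂ (hL : 0 < n ^ 2 - h - 1)
    {v : ERVoter α n g h} (hA : Reaches F v₁ v) (hB : ¬ Reaches F v₂ v) : v ∈ voters₀ F := by
  have hπ : ERScores v 1 ≤ 1 := by have := ERScores_zero_add_one v; omega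
  rw [mem_voters₀_iff hL, bias, if_pos hA, if_neg hB]
  split_ifs <;> omega

theorem notMem_voters₀_of_reaches_u₀ {v : ERVoter α n g h} (hA : ¬ Reaches F v₁ v)
    (hC : Reaches F (u₀ hL) v) : v ∉ voters₀ F := by
  rw [mem_voters₀_iff hL, bias, if_neg hA, if_pos hC]
  split_ifs <;> omega

theorem reaches_of_mem_voters₀ (hL : 0 < n ^ 2 - h - 1) (hF : F ⊆ EREdgesH1 X)
    {v : ERVoter α n g h} (hbot : ERScores v 1 = 1) (hv : v ∈ voters₀ F) :
    Reaches F v₁ v ∧ ¬ Reaches F v₂ v := by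
  rw [mem_voters₀_iff hL, bias, hbot] at hv
  have hA : Reaches F v₁ v := by_contra fun hA => by rw [if_neg hA] at hv; split_ifs at hv <;> omega
  refine ⟨hA, fun hB => ?_⟩
  rcases eq_or_reaches_u₀_of_reaches_v₁ hL hF hA with rfl | rfl | hC
  · simp [ERScores] at hbot
  · simp [ERScores] at hbot
  · rw [if_pos hA, if_pos hB, if_pos hC] at hv
    omega

theorem mem_voters₀_of_top (hF : F ⊆ EREdgesH1 X) (hu₀ : Reaches F v₁ (u₀ hL))
    (hv₂ : (v₁, v₂) ∈ F) {v : ERVoter α n g h} (htop : ERScores v 1 = 0) : v ∈ voters₀ F := by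
  by_cases hA : Reaches F v₁ v
  · exact mem_voters₀_of_reaches_v₁ hL htop hA
  refine mem_voters₀_of_not_reaches hL htop (fun hB => hA ?_) (fun hC => hA (hu₀.trans hC))
  rcases eq_or_reaches_u₀_of_reaches_v₂ hL hF hB with rfl | ⟨-, hC⟩
  exacts [.single hv₂, hu₀.trans hC]

theorem notMem_voters₀_of_v₂_u₀_mem (hF : F ⊆ EREdgesH1 X) (hv₂u₀ : (v₂, u₀ hL) ∈ F)
    {v : ERVoter α n g h} (hbot : ERScores v 1 = 1) : v ∉ voters₀ F := fun hv => by
  obtain ⟨hA, hB⟩ := reaches_of_mem_voters₀ hL hF hbot hv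
  rcases eq_or_reaches_u₀_of_reaches_v₁ hL hF hA with rfl | rfl | hC
  · simp [ERScores] at hbot
  · simp [ERScores] at hbot
  · exact hB (.head hv₂u₀ hC)

theorem notMem_voters₀_of_subset_H2 (hL : 0 < n ^ 2 - h - 1) (hF : F ⊆ EREdgesH2 X)
    {v : ERVoter α n g h} (hbot : ERScores v 1 = 1) : v ∉ voters₀ F := fun hv => by
  obtain ⟨hA, hB⟩ := reaches_of_mem_voters₀ hL (hF.trans EREdgesH2_subset_EREdgesH1) hbot hv
  rcases eq_or_reaches_v₂_of_reaches_v₁ hF hA with rfl | hB'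
  exacts [by simp [ERScores] at hbot, hB hB']

theorem card_eq_card_filter_add (s : Finset (ERVoter α n g h)) :
    #s = #{b : Bool | Sum.inl b ∈ s} + #{i | line i ∈ s} + #{x | setNode x ∈ s} +
      #{p : α × Fin n | elem p.1 p.2 ∈ s} + #{k | isolated k ∈ s} := by
  conv_lhs => rw [← filter_univ_mem s]
  simp only [card_filter, Fintype.sum_sum_type, add_assoc]
  congr!

theorem card_voters₀_of_subset_of_subset (hL : 0 < n ^ 2 - h - 1) (hH2 : EREdgesH2 X ⊆ F)
    (hH1 : F ⊆ EREdgesH1 X) :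
    #(voters₀ F) = 2 + (n ^ 2 - h - 1) + g := by
  have hu₀ : Reaches F v₁ (u₀ hL) := .head (hH2 v₁_v₂_mem_H2) (.single (hH2 (v₂_u₀_mem_H2 hL)))
  have htop := fun v => mem_voters₀_of_top hL hH1 hu₀ (hH2 v₁_v₂_mem_H2) (v := v)
  have hbot := fun v => notMem_voters₀_of_v₂_u₀_mem hL hH1 (hH2 (v₂_u₀_mem_H2 hL)) (v := v)
  rw [card_eq_card_filter_add, filter_true_of_mem fun b _ => htop (Sum.inl b) rfl,
    filter_true_of_mem fun i _ => htop (line i) rfl,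
    filter_true_of_mem fun x _ => htop (setNode x) rfl,
    filter_false_of_mem fun p _ => hbot (elem p.1 p.2) rfl,
    filter_false_of_mem fun k _ => hbot (isolated k) rfl]
  simp

theorem le_card_voters₀_H1_diff_cutEdges {J : Finset (Fin g)} (hcov : ∀ z : α, ∃ x ∈ J, z ∈ X x) :
    2 + (n ^ 2 - h - 1) + g + Fintype.card α * n ≤ #(voters₀ (EREdgesH1 X \ cutEdges hL J)) := by
  set F := EREdgesH1 X \ cutEdges hL J
  have hF : F ⊆ EREdgesH1 X := Set.sdiff_subset
  have hmem : ∀ p ∈ EREdgesH2 X, p ∉ cutEdges hL J → p ∈ F :=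
    fun p hp hcut => ⟨EREdgesH2_subset_EREdgesH1 hp, hcut⟩
  have hu₀ : Reaches F v₁ (u₀ hL) := .single ⟨v₁_u₀_mem_H1 hL, by simp [cutEdges]⟩
  have hv₂ : (v₁, v₂) ∈ F := hmem _ v₁_v₂_mem_H2 (by simp [cutEdges])
  have htop := fun v => mem_voters₀_of_top hL hF hu₀ hv₂ (v := v)
  have hlast : Reaches F v₁ (lastLine hL) :=
    hu₀.trans (reaches_u₀_line hL (fun i j hij => hmem _ (line_mem_H2 hij) (by simp [cutEdges])) _)
  have helem : ∀ (z : α) (j : Fin n), elem z j ∈ voters₀ F := by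
    intro z j
    obtain ⟨x, hxJ, hzx⟩ := hcov z
    have hz₀ : Reaches F v₁ (elem z ⟨0, j.pos⟩) :=
      (hlast.tail (hmem _ (lastLine_setNode_mem_H2 hL x) (by simp [cutEdges, hxJ]))).tail
        (hmem _ (setNode_elem_mem_H2 hzx rfl) (by simp [cutEdges]))
    have hA : Reaches F v₁ (elem z j) := hz₀.trans <|
      reaches_elem (fun z i j hij => hmem _ (elem_mem_H2 hij) (by simp [cutEdges])) z
        (Fin.le_def.2 (Nat.zero_le _))
    exact mem_voters₀_of_reaches_v₁_of_not_reaches_v₂ hL hA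
      fun hB => by simpa using eq_v₂_of_reaches_v₂_of_diff_cutEdges hL subset_rfl hB
  rw [card_eq_card_filter_add, filter_true_of_mem fun b _ => htop (Sum.inl b) rfl,
    filter_true_of_mem fun i _ => htop (line i) rfl,
    filter_true_of_mem fun x _ => htop (setNode x) rfl,
    filter_true_of_mem fun p _ => helem p.1 p.2]
  simp

theorem le_card_voters₀_H2_diff_cutEdges (J : Finset (Fin g)) :
    2 + (g - #J) ≤ #(voters₀ (EREdgesH2 X \ cutEdges hL J)) := by
  set F := EREdgesH2 X \ cutEdges hL J
  have hF : F ⊆ EREdgesH1 X \ cutEdges hL J :=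
    Set.sdiff_subset_sdiff_left EREdgesH2_subset_EREdgesH1
  have hv₂ : (v₁, v₂) ∈ F := ⟨v₁_v₂_mem_H2, by simp [cutEdges]⟩
  have hbool : ∀ b, Sum.inl b ∈ voters₀ F := by
    rintro (_ | _)
    exacts [mem_voters₀_of_reaches_v₁ hL rfl .refl, mem_voters₀_of_reaches_v₁ hL rfl (.single hv₂)]
  have hset : ∀ x ∉ J, setNode x ∈ voters₀ F := fun x hx =>
    mem_voters₀_of_not_reaches hL rfl
      (fun hB => by simpa using eq_v₂_of_reaches_v₂_of_diff_cutEdges hL hF hB)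
      (fun hC => by
        rcases eq_or_mem_of_reaches_setNode hL (hF.trans Set.sdiff_subset) hC with h | h
        · simp at h
        · exact (hF h).2 (Or.inr ⟨x, hx, rfl⟩))
  have hJ : Jᶜ ⊆ ({x | setNode x ∈ voters₀ F} : Finset (Fin g)) := fun x hx =>
    mem_filter.2 ⟨mem_univ x, hset x (mem_compl.1 hx)⟩
  rw [card_eq_card_filter_add, filter_true_of_mem fun b _ => hbool b]
  have := card_le_card hJ
  rw [card_compl, Fintype.card_fin] at this
  simp only [Finset.card_univ, Fintype.card_bool]
  omega

theorem card_voters₀_le_of_subset_H1 (hL : 0 < n ^ 2 - h - 1) (hF : F ⊆ EREdgesH1 X) :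
    #(voters₀ F) ≤ 2 + (n ^ 2 - h - 1) + g + #{p : α × Fin n | elem p.1 p.2 ∈ voters₀ F} := by
  have hiso : ∀ k, isolated k ∉ voters₀ F := fun k hk => by
    simpa using eq_of_reaches_isolated hF (reaches_of_mem_voters₀ hL hF rfl hk).1
  rw [card_eq_card_filter_add, filter_false_of_mem fun k _ => hiso k, card_empty, add_zero]
  have hb := card_filter_le (univ : Finset Bool) (Sum.inl · ∈ voters₀ F)
  have hi := card_filter_le (univ : Finset (Fin (n ^ 2 - h - 1))) (line · ∈ voters₀ F)
  have hx := card_filter_le (univ : Finset (Fin g)) (setNode · ∈ voters₀ F)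
  simp only [card_univ, Fintype.card_bool, Fintype.card_fin] at hb hi hx
  omega

theorem card_elem_voters₀_le (hL : 0 < n ^ 2 - h - 1) (hF : F ⊆ EREdgesH1 X) {J : Finset (Fin g)}
    (hJ : ∀ x, (lastLine hL, setNode x) ∈ F → x ∈ J) :
    #{p : α × Fin n | elem p.1 p.2 ∈ voters₀ F} ≤ #(J.biUnion X) * n := by
  calc #{p : α × Fin n | elem p.1 p.2 ∈ voters₀ F}
      ≤ #(J.biUnion X ×ˢ (univ : Finset (Fin n))) := by
        refine card_le_card fun p hp => mem_product.2 ⟨?_, mem_univ _⟩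
        have hA := (reaches_of_mem_voters₀ hL hF rfl (mem_filter.1 hp).2).1
        obtain ⟨x, hzx, hedge, -⟩ := exists_setNode_of_reaches_elem hL hF hA
        exact mem_biUnion.2 ⟨x, hJ x hedge, hzx⟩
    _ = #(J.biUnion X) * n := by rw [card_product, card_univ, Fintype.card_fin]

theorem card_voters₀_le_of_v₂_u₀_notMem (hF : F ⊆ EREdgesH2 X) (hv₂u₀ : (v₂, u₀ hL) ∉ F)
    (hline : ∀ i j : Fin (n ^ 2 - h - 1), (i : ℕ) + 1 = j → (line i, line j) ∈ F)
    {J : Finset (Fin g)} (hJ : ∀ x ∈ J, (lastLine hL, setNode x) ∈ F) :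
    #(voters₀ F) ≤ 2 + (g - #J) := by
  have hF₁ : F ⊆ EREdgesH1 X := hF.trans EREdgesH2_subset_EREdgesH1
  have hA : ∀ w, Reaches F v₁ w → w = v₁ ∨ w = v₂ := fun w hw =>
    (eq_or_reaches_v₂_of_reaches_v₁ hF hw).imp_right fun hB =>
      (eq_or_reaches_u₀_of_reaches_v₂ hL hF₁ hB).resolve_right fun h => hv₂u₀ h.1
  have hline₀ : ∀ i, line i ∉ voters₀ F := fun i =>
    notMem_voters₀_of_reaches_u₀ hL (fun h => by simpa using hA _ h) (reaches_u₀_line hL hline i)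
  have hset : ∀ x, (lastLine hL, setNode x) ∈ F → setNode x ∉ voters₀ F := fun x hx =>
    notMem_voters₀_of_reaches_u₀ hL (fun h => by simpa using hA _ h)
      ((reaches_u₀_line hL hline _).tail hx)
  have hbot := fun v => notMem_voters₀_of_subset_H2 hL hF (v := v)
  have hsub : ({x | setNode x ∈ voters₀ F} : Finset (Fin g)) ⊆ Jᶜ := fun x hx =>
    mem_compl.2 fun hx' => hset x (hJ x hx') (mem_filter.1 hx).2
  rw [card_eq_card_filter_add, filter_false_of_mem fun i _ => hline₀ i,
    filter_false_of_mem fun (p : α × Fin n) _ => hbot (elem p.1 p.2) rfl,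
    filter_false_of_mem fun (k : Fin (g - h + 1)) _ => hbot (isolated k) rfl]
  have hb := card_filter_le (univ : Finset Bool) (Sum.inl · ∈ voters₀ F)
  have hx := card_le_card hsub
  rw [card_compl, Fintype.card_fin] at hx
  simp only [card_univ, Fintype.card_bool] at hb
  simp only [card_empty]
  omega

theorem expected_deltaMoV_pos_iff (hL : 0 < n ^ 2 - h - 1)
    (F₁ F₂ H₁ H₂ : Set (ERVoter α n g h × ERVoter α n g h)) :
    (0 : ℚ) < (((MoV F₁ ERScores ERSeeds ERMsg - MoV H₁ ERScores ERSeeds ERMsg) +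
        (MoV F₂ ERScores ERSeeds ERMsg - MoV H₂ ERScores ERSeeds ERMsg) : ℤ) : ℚ) / 2 ↔
      #(voters₀ H₁) + #(voters₀ H₂) < #(voters₀ F₁) + #(voters₀ F₂) := by
  rw [div_pos_iff_of_pos_right two_pos, Int.cast_pos]
  simp only [MoV_eq_two_mul_card_voters₀_sub hL]
  omega

theorem exists_cover_of_lt_card (hL : 0 < n ^ 2 - h - 1) (hcard : Fintype.card α = n) (hhn : h < n)
    {E' : Set (ERVoter α n g h × ERVoter α n g h)}
    (hlt : 2 * (2 + (n ^ 2 - h - 1) + g) <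
      #(voters₀ (EREdgesH1 X \ E')) + #(voters₀ (EREdgesH2 X \ E'))) :
    ∃ J : Finset (Fin g), #J ≤ h ∧ ∀ z : α, ∃ x ∈ J, z ∈ X x := by
  set F₁ := EREdgesH1 X \ E'
  set F₂ := EREdgesH2 X \ E'
  have hF₁ : F₁ ⊆ EREdgesH1 X := Set.sdiff_subset
  have hF₂ : F₂ ⊆ EREdgesH2 X := Set.sdiff_subset
  have hF₂₁ : F₂ ⊆ F₁ := Set.sdiff_subset_sdiff_left EREdgesH2_subset_EREdgesH1
  have hmem : ∀ p ∈ EREdgesH2 X, p ∈ F₁ → p ∈ F₂ := fun p hp h => ⟨hp, h.2⟩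
  set J : Finset (Fin g) := {x | (lastLine hL, setNode x) ∈ F₂}
  have h₁ := card_voters₀_le_of_subset_H1 hL hF₁
  obtain ⟨z, j, hzj⟩ : ∃ z j, elem z j ∈ voters₀ F₁ := by
    by_contra! hnone
    have h₂ := card_voters₀_le_of_subset_H1 hL (hF₂₁.trans hF₁)
    rw [filter_false_of_mem fun (p : α × Fin n) _ => hnone p.1 p.2] at h₁
    rw [filter_false_of_mem fun (p : α × Fin n) _ => notMem_voters₀_of_subset_H2 hL hF₂ rfl] at h₂
    simp only [card_empty, add_zero] at h₁ h₂
    omega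
  obtain ⟨-, -, -, hlast⟩ :=
    exists_setNode_of_reaches_elem hL hF₁ (reaches_of_mem_voters₀ hL hF₁ rfl hzj).1
  have h₂ := card_voters₀_le_of_v₂_u₀_notMem hL hF₂
    (fun h => notMem_voters₀_of_v₂_u₀_mem hL hF₁ (hF₂₁ h) rfl hzj)
    (fun i j hij => hmem _ (line_mem_H2 hij) (line_mem_of_reaches_lastLine hL hF₁ hlast hij))
    (J := J) fun x hx => (mem_filter.1 hx).2
  have hC := card_elem_voters₀_le hL hF₁ (J := J) fun x hx =>
    mem_filter.2 ⟨mem_univ x, hmem _ (lastLine_setNode_mem_H2 hL x) hx⟩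
  have hJg : #J ≤ g := card_le_univ J |>.trans_eq (Fintype.card_fin g)
  have hCn : #(J.biUnion X) ≤ n := hcard ▸ card_le_univ _
  obtain ⟨hJh, hCeq⟩ := le_and_eq_of_sq_sub_add_lt_mul hCn hhn (j := #J) (by omega)
  refine ⟨J, hJh, fun z => mem_biUnion.1 ?_⟩
  rw [eq_univ_of_card _ (hCeq.trans hcard.symm)]
  exact mem_univ z

end ER

theorem edge_removal_positive_expected_deltaMoV_iff_setCover_general
    {α : Type*} [Fintype α]
    (n g h : ℕ) (hcard : Fintype.card α = n) (hhg : h ≤ g) (hgn : g < n)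
    (hL : 1 ≤ n ^ 2 - h - 1) (X : Fin g → Finset α) :
    (∃ E' : Set (ERVoter α n g h × ERVoter α n g h), E' ⊆ EREdgesH1 X ∧
        (0 : ℚ) <
          (((MoV (EREdgesH1 X \ E') ERScores (ERSeeds : Set (ERVoter α n g h)) ERMsg -
              MoV (EREdgesH1 X) ERScores (ERSeeds : Set (ERVoter α n g h)) ERMsg) +
            (MoV (EREdgesH2 X \ E') ERScores (ERSeeds : Set (ERVoter α n g h)) ERMsg -
              MoV (EREdgesH2 X) ERScores (ERSeeds : Set (ERVoter α n g h)) ERMsg) : ℤ) : ℚ)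
            / 2) ↔
    (∃ J : Finset (Fin g), J.card ≤ h ∧ ∀ z : α, ∃ x ∈ J, z ∈ X x) := by
  simp only [ER.expected_deltaMoV_pos_iff hL,
    ER.card_voters₀_of_subset_of_subset hL subset_rfl ER.EREdgesH2_subset_EREdgesH1,
    ER.card_voters₀_of_subset_of_subset hL ER.EREdgesH2_subset_EREdgesH1 subset_rfl]
  constructor
  · rintro ⟨E', -, hlt⟩
    exact ER.exists_cover_of_lt_card hL hcard (hhg.trans_lt hgn) (E' := E') (by omega)
  · rintro ⟨J, hJh, hcov⟩
    refine ⟨ER.cutEdges hL J, ER.cutEdges_subset hL J, ?_⟩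
    have h₁ := ER.le_card_voters₀_H1_diff_cutEdges hL hcov
    have h₂ := ER.le_card_voters₀_H2_diff_cutEdges hL (X := X) J
    have hJg : J.card ≤ g := Finset.card_le_univ J |>.trans_eq (Fintype.card_fin g)
    rw [hcard, ← sq] at h₁
    omega

/-- There is an edge set E' ⊆ E with expected ΔMoV⁻(E') = (ΔMoV⁻(E',H₁)+ΔMoV⁻(E',H₂))/2 > 0
if and only if the Set-Cover instance admits a cover of size at most h. -/
theorem edge_removal_positive_expected_deltaMoV_iff_setCover
    {α : Type*} [Fintype α] [DecidableEq α]
    (n g h : ℕ) (hcard : Fintype.card α = n) (hh : 1 ≤ h) (hhg : h ≤ g) (hgn : g < n)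
    (hL : 1 ≤ n ^ 2 - h - 1) (X : Fin g → Finset α) :
    (∃ E' : Set (ERVoter α n g h × ERVoter α n g h), E' ⊆ EREdgesH1 X ∧
        (0 : ℚ) <
          (((MoV (EREdgesH1 X \ E') ERScores (ERSeeds : Set (ERVoter α n g h)) ERMsg -
              MoV (EREdgesH1 X) ERScores (ERSeeds : Set (ERVoter α n g h)) ERMsg) +
            (MoV (EREdgesH2 X \ E') ERScores (ERSeeds : Set (ERVoter α n g h)) ERMsg -
              MoV (EREdgesH2 X) ERScores (ERSeeds : Set (ERVoter α n g h)) ERMsg) : ℤ) : ℚ)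
            / 2) ↔
    (∃ J : Finset (Fin g), J.card ≤ h ∧ ∀ z : α, ∃ x ∈ J, z ∈ X x) :=
  edge_removal_positive_expected_deltaMoV_iff_setCover_general n g h hcard hhg hgn hL X

end EdgeRemovalSetCover
end

section
/- Let N be a set of n ≥ 1 elements and X a collection of g subsets of N with 1 ≤ h ≤ g and ng − h − 1 ≥ 1. Construct the deterministic election instance with three candidates c_0, c_1, c_2: a node v_1 with score vector ⟨0,1,2⟩, the unique seed, sending the message +1 on c_2; a directed line L_1 of ng−h−1 nodes with score vector ⟨2,0,1⟩; a node v_x with score vector ⟨2,0,1⟩ for each x ∈ X; for each z ∈ N a directed line L_z of g nodes with score vector ⟨0,2,1⟩, with an edge from v_x to the first node of L_z whenever z ∈ x; and n²g² isolated nodes with score vector ⟨2,1,0⟩ together with n²g² isolated nodes with score vector ⟨1,2,0⟩. The addable edges (each with probability 1) are: the edge from v_1 to the first node of L_1, and one edge from the last node of L_1 to each v_x. Then there exists a set E* of addable edges with ΔMoV^+(E*) > 0 if and only if there exists X* ⊆ X with |X*| ≤ h and ⋃_{x∈X*} x = N. -/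
/-!
With ε = 1/3 a voter's final ballot depends only on whether it receives the seed's message:
every reached voter votes for c₂ and every other voter keeps its initial favourite. Without the
edge into L₁ nobody but v₁ is reached and MoV = g − h − 1. With it, L₁ and the chosen `v_x`,
indexed by J, move from c₀ to c₂, and the g voters of L_z move from c₁ to c₂ for every z
covered by J; the n²g² isolated c₁-voters keep c₁ ahead of c₂, so
MoV = g − |J| + g·|⋃J| − ng. An uncovered element costs g votes, which the margin cannot absorb,
so the gain is positive exactly when J covers N with |J| ≤ h.
-/

open scoped Classical

section EdgeAdditionSetCover

variable (α : Type*) (n g h : ℕ)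

/-- Voters: the node v₁, the line L₁ of ng−h−1 nodes, a node `v_x` for each set of the
collection, a line L_z of g nodes for each element `z`, and 2·n²g² isolated nodes. -/
abbrev EAVoter :=
  Unit ⊕ (Fin (n * g - h - 1) ⊕ (Fin g ⊕ ((α × Fin g) ⊕ (Fin (n ^ 2 * g ^ 2) ⊕ Fin (n ^ 2 * g ^ 2)))))

variable {α n g h}

/-- Base edges: L₁ is a directed line; `v_x` points to the first node of L_z whenever
`z ∈ x`; each L_z is a directed line. -/
def EAEdges (X : Fin g → Finset α) : Set (EAVoter α n g h × EAVoter α n g h) :=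
  { p | (∃ i j : Fin (n * g - h - 1), (i : ℕ) + 1 = (j : ℕ) ∧
          p.1 = Sum.inr (Sum.inl i) ∧ p.2 = Sum.inr (Sum.inl j)) ∨
        (∃ (x : Fin g) (z : α) (j : Fin g), z ∈ X x ∧ (j : ℕ) = 0 ∧
          p.1 = Sum.inr (Sum.inr (Sum.inl x)) ∧
          p.2 = Sum.inr (Sum.inr (Sum.inr (Sum.inl (z, j))))) ∨
        (∃ (z : α) (i j : Fin g), (i : ℕ) + 1 = (j : ℕ) ∧
          p.1 = Sum.inr (Sum.inr (Sum.inr (Sum.inl (z, i)))) ∧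
          p.2 = Sum.inr (Sum.inr (Sum.inr (Sum.inl (z, j))))) }

/-- Addable edges: from v₁ to the first node of L₁, and from the last node of L₁ to each
`v_x`. -/
def EAAddable : Set (EAVoter α n g h × EAVoter α n g h) :=
  { p | (∃ j : Fin (n * g - h - 1), (j : ℕ) = 0 ∧
          p.1 = Sum.inl () ∧ p.2 = Sum.inr (Sum.inl j)) ∨
        (∃ (i : Fin (n * g - h - 1)) (x : Fin g), (i : ℕ) + 1 = n * g - h - 1 ∧
          p.1 = Sum.inr (Sum.inl i) ∧ p.2 = Sum.inr (Sum.inr (Sum.inl x))) }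

/-- Scores: v₁ has ⟨0,1,2⟩; L₁ and the `v_x` have ⟨2,0,1⟩; the L_z have ⟨0,2,1⟩; the
isolated nodes have ⟨2,1,0⟩ and ⟨1,2,0⟩ respectively. -/
def EAScores : EAVoter α n g h → Fin 3 → ℕ
  | Sum.inl _ => ![0, 1, 2]
  | Sum.inr (Sum.inl _) => ![2, 0, 1]
  | Sum.inr (Sum.inr (Sum.inl _)) => ![2, 0, 1]
  | Sum.inr (Sum.inr (Sum.inr (Sum.inl _))) => ![0, 2, 1]
  | Sum.inr (Sum.inr (Sum.inr (Sum.inr (Sum.inl _)))) => ![2, 1, 0]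
  | Sum.inr (Sum.inr (Sum.inr (Sum.inr (Sum.inr _)))) => ![1, 2, 0]

/-- The unique seed is v₁. -/
def EASeeds : Set (EAVoter α n g h) := { v | v = Sum.inl () }

/-- The seed sends a single positive news article on c₂. -/
def EAMsg : EAVoter α n g h → Fin 3 → ℤ := fun _ => ![0, 0, 1]


open Finset

lemma reaches_line_of_reaches_head {V : Type*} {Es : Set (V × V)} {m : ℕ} {s : V}
    (f : Fin m → V) (hhead : ∀ i : Fin m, (i : ℕ) = 0 → Reaches Es s (f i))
    (hstep : ∀ i j : Fin m, (i : ℕ) + 1 = j → (f i, f j) ∈ Es) (k : Fin m) :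
    Reaches Es s (f k) := by
  obtain ⟨k, hk⟩ := k
  induction k with
  | zero => exact hhead _ rfl
  | succ k ih => exact (ih (by omega)).tail (hstep ⟨k, by omega⟩ ⟨k + 1, hk⟩ rfl)

lemma MoV_fin_three {V : Type*} [Fintype V] (Es : Set (V × V)) (π : V → Fin 3 → ℕ) (S : Set V)
    (m : V → Fin 3 → ℤ) :
    MoV Es π S m = #(finalVoters Es π S m 0) -
      ((max #(finalVoters Es π S m 1) #(finalVoters Es π S m 2) : ℕ) : ℤ) := by
  rw [MoV, show univ.erase (0 : Fin 3) = {1, 2} by decide, sup_insert, sup_singleton]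

section Ballots

variable [Fintype α]

lemma eps_EAScores : eps (EAScores : EAVoter α n g h → Fin 3 → ℕ) = 1 / 3 := by
  have hmax : (univ.sup fun v : EAVoter α n g h => univ.sup (EAScores v)) = 2 := by
    refine le_antisymm (Finset.sup_le fun v _ => Finset.sup_le fun i _ => ?_) ?_
    · rcases v with _ | _ | _ | _ | _ | _ <;> fin_cases i <;> simp [EAScores]
    · refine le_trans ?_ (le_sup (f := fun v : EAVoter α n g h => univ.sup (EAScores v))
        (mem_univ (Sum.inl ())))
      exact le_sup (f := EAScores (Sum.inl ())) (mem_univ 2)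
  rw [eps, hmax]
  norm_num

lemma finalScore_EAScores (Es : Set (EAVoter α n g h × EAVoter α n g h)) (v : EAVoter α n g h)
    (i : Fin 3) :
    finalScore Es EAScores EASeeds EAMsg v i =
      2 / 3 * EAScores v i +
        if Reaches Es (Sum.inl ()) v then (![0, 0, 1] : Fin 3 → ℚ) i else 0 := by
  have hseeds : univ.filter (fun s => s ∈ (EASeeds : Set (EAVoter α n g h)) ∧ Reaches Es s v) =
      if Reaches Es (Sum.inl ()) v then {Sum.inl ()} else ∅ := by
    ext s; split_ifs <;> simp_all [EASeeds]
  rw [finalScore, hseeds, eps_EAScores]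
  split_ifs
  · fin_cases i <;> simp [EAMsg] <;> norm_num
  · simp only [sum_empty]; norm_num

noncomputable def EAVote (reached : Prop) : EAVoter α n g h → Fin 3
  | Sum.inl _ => 2
  | Sum.inr (Sum.inl _) | Sum.inr (Sum.inr (Sum.inl _)) => if reached then 2 else 0
  | Sum.inr (Sum.inr (Sum.inr (Sum.inl _))) => if reached then 2 else 1
  | Sum.inr (Sum.inr (Sum.inr (Sum.inr (Sum.inl _)))) => 0
  | Sum.inr (Sum.inr (Sum.inr (Sum.inr (Sum.inr _)))) => 1

lemma mem_finalVoters_iff (Es : Set (EAVoter α n g h × EAVoter α n g h)) (v : EAVoter α n g h)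
    (c : Fin 3) :
    v ∈ finalVoters Es EAScores EASeeds EAMsg c ↔ EAVote (Reaches Es (Sum.inl ()) v) v = c := by
  simp only [finalVoters, mem_filter, mem_univ, true_and, finalScore_EAScores,
    Fin.forall_fin_succ]
  by_cases hr : Reaches Es (Sum.inl ()) v <;>
    rcases v with _ | _ | _ | _ | _ | _ <;> fin_cases c <;> simp [EAVote, EAScores, hr] <;>
    norm_num

end Ballots

section Reachability

variable (E' : Set (EAVoter α n g h × EAVoter α n g h))

def HasEntryEdge : Prop :=
  ∃ j : Fin (n * g - h - 1), (j : ℕ) = 0 ∧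
    ((Sum.inl (), Sum.inr (Sum.inl j)) : EAVoter α n g h × EAVoter α n g h) ∈ E'

noncomputable def exitTargets : Finset (Fin g) :=
  univ.filter fun x => ∃ i : Fin (n * g - h - 1), (i : ℕ) + 1 = n * g - h - 1 ∧
    ((Sum.inr (Sum.inl i), Sum.inr (Sum.inr (Sum.inl x))) : EAVoter α n g h × EAVoter α n g h) ∈ E'

/-- The voters reached from v₁ when `entry` says whether L₁ is entered and `J` lists the `v_x`
attached to the end of L₁. -/
def EAReachable (X : Fin g → Finset α) (entry : Prop) (J : Finset (Fin g)) :
    EAVoter α n g h → Prop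
  | Sum.inl _ => True
  | Sum.inr (Sum.inl _) => entry
  | Sum.inr (Sum.inr (Sum.inl x)) => entry ∧ x ∈ J
  | Sum.inr (Sum.inr (Sum.inr (Sum.inl (z, _)))) => entry ∧ z ∈ J.biUnion X
  | Sum.inr (Sum.inr (Sum.inr (Sum.inr _))) => False

variable {E'} (X : Fin g → Finset α)

lemma EAReachable.of_mem_edges (hE' : E' ⊆ EAAddable) {a b : EAVoter α n g h}
    (hab : (a, b) ∈ EAEdges X ∪ E') (ha : EAReachable X (HasEntryEdge E') (exitTargets E') a) :
    EAReachable X (HasEntryEdge E') (exitTargets E') b := by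
  rcases hab with hab | hab
  · rcases hab with ⟨i, j, -, rfl, rfl⟩ | ⟨x, z, j, hzx, -, rfl, rfl⟩ | ⟨z, i, j, -, rfl, rfl⟩
    · exact ha
    · exact ⟨ha.1, mem_biUnion.2 ⟨x, ha.2, hzx⟩⟩
    · exact ha
  · rcases hE' hab with ⟨j, hj, rfl, rfl⟩ | ⟨i, x, hi, rfl, rfl⟩
    · exact ⟨j, hj, hab⟩
    · exact ⟨ha, mem_filter.2 ⟨mem_univ x, i, hi, hab⟩⟩

lemma reaches_iff_EAReachable (hE' : E' ⊆ EAAddable) (v : EAVoter α n g h) :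
    Reaches (EAEdges X ∪ E') (Sum.inl ()) v ↔
      EAReachable X (HasEntryEdge E') (exitTargets E') v := by
  constructor
  · intro hr
    induction hr with
    | refl => trivial
    | tail _ hab ih => exact ih.of_mem_edges X hE' hab
  have hL₁ (hentry : HasEntryEdge E') (i : Fin (n * g - h - 1)) :
      Reaches (EAEdges X ∪ E') (Sum.inl ()) (Sum.inr (Sum.inl i)) := by
    refine reaches_line_of_reaches_head (fun i => Sum.inr (Sum.inl i)) (fun i hi => ?_)
      (fun i j hij => Or.inl (Or.inl ⟨i, j, hij, rfl, rfl⟩)) i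
    obtain ⟨j, hj, hjE⟩ := hentry
    obtain rfl : j = i := Fin.ext (hj.trans hi.symm)
    exact .single (Or.inr hjE)
  have hvx (hentry : HasEntryEdge E') {x : Fin g} (hx : x ∈ exitTargets E') :
      Reaches (EAEdges X ∪ E') (Sum.inl ()) (Sum.inr (Sum.inr (Sum.inl x))) := by
    obtain ⟨i, -, hiE⟩ := (mem_filter.1 hx).2
    exact (hL₁ hentry i).tail (Or.inr hiE)
  rcases v with ⟨⟩ | i | x | ⟨z, k⟩ | _ | _
  · exact fun _ => .refl
  · exact fun hentry => hL₁ hentry i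
  · exact fun ⟨hentry, hx⟩ => hvx hentry hx
  · rintro ⟨hentry, hz⟩
    obtain ⟨x, hx, hzx⟩ := mem_biUnion.1 hz
    refine reaches_line_of_reaches_head (fun k => Sum.inr (Sum.inr (Sum.inr (Sum.inl (z, k)))))
      (fun k hk => (hvx hentry hx).tail (Or.inl (Or.inr (Or.inl ⟨x, z, k, hzx, hk, rfl, rfl⟩))))
      (fun i j hij => Or.inl (Or.inr (Or.inr ⟨z, i, j, hij, rfl, rfl⟩))) k
  · exact False.elim
  · exact False.elim

def addableWithExits (J : Finset (Fin g)) : Set (EAVoter α n g h × EAVoter α n g h) :=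
  {p | p ∈ EAAddable ∧ ∀ x, p.2 = Sum.inr (Sum.inr (Sum.inl x)) → x ∈ J}

lemma hasEntryEdge_addableWithExits (hL : 1 ≤ n * g - h - 1) (J : Finset (Fin g)) :
    HasEntryEdge (addableWithExits J : Set (EAVoter α n g h × EAVoter α n g h)) :=
  ⟨⟨0, by omega⟩, rfl, Or.inl ⟨_, rfl, rfl, rfl⟩, by simp⟩

lemma exitTargets_addableWithExits (hL : 1 ≤ n * g - h - 1) (J : Finset (Fin g)) :
    exitTargets (addableWithExits J : Set (EAVoter α n g h × EAVoter α n g h)) = J := by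
  ext x
  simp [exitTargets, addableWithExits, EAAddable]
  exact fun _ => ⟨⟨n * g - h - 1 - 1, by omega⟩, by simp; omega⟩

end Reachability

section MarginOfVictory

variable [Fintype α] (X : Fin g → Finset α)

lemma card_EAVote_entered (J : Finset (Fin g)) (c : Fin 3) :
    #(univ.filter fun v : EAVoter α n g h => EAVote (EAReachable X True J v) v = c) =
      ![#Jᶜ + n ^ 2 * g ^ 2, #(J.biUnion X)ᶜ * g + n ^ 2 * g ^ 2,
        1 + (n * g - h - 1) + #J + #(J.biUnion X) * g] c := by
  have hcovered : univ.filter (fun z => ∃ x ∈ J, z ∈ X x) = J.biUnion X := by ext; simp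
  have huncovered : univ.filter (fun z => ∀ x ∈ J, z ∉ X x) = (J.biUnion X)ᶜ := by ext; simp
  fin_cases c <;>
    simp only [card_filter, Fintype.sum_sum_type, Fintype.sum_prod_type, EAVote, EAReachable,
      true_and] <;>
    simp [sum_ite, filter_not, compl_eq_univ_sdiff, ite_eq_iff, add_assoc, hcovered, huncovered]

lemma card_EAVote_not_entered (J : Finset (Fin g)) (c : Fin 3) :
    #(univ.filter fun v : EAVoter α n g h => EAVote (EAReachable X False J v) v = c) =
      ![(n * g - h - 1) + g + n ^ 2 * g ^ 2, Fintype.card α * g + n ^ 2 * g ^ 2, 1] c := by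
  fin_cases c <;>
    simp only [card_filter, Fintype.sum_sum_type, Fintype.sum_prod_type, EAVote, EAReachable,
      false_and] <;>
    simp [add_assoc]

lemma MoV_of_reaches_iff (hcard : Fintype.card α = n) (hh : 1 ≤ h) (hL : 1 ≤ n * g - h - 1)
    (Es : Set (EAVoter α n g h × EAVoter α n g h)) (entry : Prop) (J : Finset (Fin g))
    (hreach : ∀ v, Reaches Es (Sum.inl ()) v ↔ EAReachable X entry J v) :
    MoV Es EAScores EASeeds EAMsg =
      if entry then (g : ℤ) - #J + g * #(J.biUnion X) - n * g else (g : ℤ) - h - 1 := by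
  have hfinal (c : Fin 3) : finalVoters Es EAScores EASeeds EAMsg c =
      univ.filter fun v => EAVote (EAReachable X entry J v) v = c := by
    ext v; simp [mem_finalVoters_iff, hreach]
  have hJ : #J ≤ g := by simpa using card_le_univ J
  have hC : #(J.biUnion X) ≤ n := hcard ▸ card_le_univ _
  have hng : 3 ≤ n * g := by omega
  have hsq : 3 * (n * g) ≤ n ^ 2 * g ^ 2 := by nlinarith
  have hg : g ≤ n * g := Nat.le_mul_of_pos_left g (Nat.pos_of_ne_zero (by rintro rfl; simp at hng))
  simp only [MoV_fin_three, hfinal]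
  split_ifs with hentry
  · simp only [eq_true hentry, card_EAVote_entered, Matrix.cons_val, card_compl,
      Fintype.card_fin, hcard]
    have hCg : #(J.biUnion X) * g ≤ n * g := Nat.mul_le_mul_right g hC
    rw [max_eq_left (by omega)]
    push_cast [Nat.cast_sub hJ, Nat.cast_sub hC]
    ring
  · simp only [eq_false hentry, card_EAVote_not_entered, Matrix.cons_val, hcard]
    rw [max_eq_left (by nlinarith)]
    push_cast
    have hL' : ((n * g - h - 1 : ℕ) : ℤ) = n * g - h - 1 := by omega
    linear_combination hL'

lemma MoV_union_addable (hcard : Fintype.card α = n) (hh : 1 ≤ h) (hL : 1 ≤ n * g - h - 1)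
    {E' : Set (EAVoter α n g h × EAVoter α n g h)} (hE' : E' ⊆ EAAddable) :
    MoV (EAEdges X ∪ E') EAScores EASeeds EAMsg =
      if HasEntryEdge E' then
        (g : ℤ) - #(exitTargets E') + g * #((exitTargets E').biUnion X) - n * g
      else (g : ℤ) - h - 1 :=
  MoV_of_reaches_iff X hcard hh hL _ _ _ (reaches_iff_EAReachable X hE')

lemma card_le_and_biUnion_eq_univ_of_gain (hcard : Fintype.card α = n) (hhg : h ≤ g)
    (hL : 1 ≤ n * g - h - 1) (J : Finset (Fin g))
    (hgain : (g : ℤ) - h - 1 < g - #J + g * #(J.biUnion X) - n * g) :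
    #J ≤ h ∧ J.biUnion X = univ := by
  have hC : #(J.biUnion X) ≤ n := hcard ▸ card_le_univ _
  obtain hlt | hfull := hC.lt_or_eq
  · exfalso
    obtain rfl | hJ := J.eq_empty_or_nonempty
    · simp only [card_empty, biUnion_empty, CharP.cast_eq_zero, mul_zero] at hgain
      omega
    · have hCg : (g : ℤ) * #(J.biUnion X) ≤ g * (n - 1) := by gcongr; omega
      have hhg' : (h : ℤ) ≤ g := by exact_mod_cast hhg
      have hJpos : (1 : ℤ) ≤ #J := by exact_mod_cast hJ.card_pos
      linarith
  · refine ⟨?_, eq_univ_of_card _ (hfull.trans hcard.symm)⟩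
    rw [hfull] at hgain
    linarith

end MarginOfVictory

theorem edge_addition_positive_deltaMoV_iff_setCover_general {α : Type*} [Fintype α]
    (n g h : ℕ) (hcard : Fintype.card α = n) (hh : 1 ≤ h) (hhg : h ≤ g)
    (hL : 1 ≤ n * g - h - 1) (X : Fin g → Finset α) :
    (∃ E' : Set (EAVoter α n g h × EAVoter α n g h), E' ⊆ EAAddable ∧
        0 < MoV (EAEdges X ∪ E') EAScores (EASeeds : Set (EAVoter α n g h)) EAMsg -
              MoV (EAEdges X) EAScores (EASeeds : Set (EAVoter α n g h)) EAMsg) ↔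
    (∃ J : Finset (Fin g), J.card ≤ h ∧ ∀ z : α, ∃ x ∈ J, z ∈ X x) := by
  have hbase : MoV (EAEdges X) EAScores (EASeeds : Set (EAVoter α n g h)) EAMsg = g - h - 1 := by
    simpa [HasEntryEdge] using MoV_union_addable X hcard hh hL (Set.empty_subset _)
  constructor
  · rintro ⟨E', hE', hgain⟩
    rw [MoV_union_addable X hcard hh hL hE', hbase] at hgain
    split_ifs at hgain
    · obtain ⟨hJ, hcover⟩ := card_le_and_biUnion_eq_univ_of_gain X hcard hhg hL _ (by linarith)
      exact ⟨exitTargets E', hJ, fun z => mem_biUnion.1 (hcover ▸ mem_univ z)⟩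
    · simp at hgain
  · rintro ⟨J, hJ, hcover⟩
    have hfull : J.biUnion X = univ := eq_univ_of_forall fun z => mem_biUnion.2 (hcover z)
    refine ⟨addableWithExits J, fun p hp => hp.1, ?_⟩
    rw [MoV_union_addable X hcard hh hL fun p hp => hp.1, hbase,
      if_pos (hasEntryEdge_addableWithExits hL J), exitTargets_addableWithExits hL J, hfull,
      card_univ, hcard]
    have hJ' : (#J : ℤ) ≤ h := by exact_mod_cast hJ
    linarith

/-- There is a set E* of addable edges with ΔMoV⁺(E*) > 0 if and only if the Set-Cover
instance admits a cover of size at most h. -/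
theorem edge_addition_positive_deltaMoV_iff_setCover {α : Type*} [Fintype α] [DecidableEq α]
    (n g h : ℕ) (hcard : Fintype.card α = n) (hn : 1 ≤ n) (hh : 1 ≤ h) (hhg : h ≤ g)
    (hL : 1 ≤ n * g - h - 1) (X : Fin g → Finset α) :
    (∃ E' : Set (EAVoter α n g h × EAVoter α n g h), E' ⊆ EAAddable ∧
        0 < MoV (EAEdges X ∪ E') EAScores (EASeeds : Set (EAVoter α n g h)) EAMsg -
              MoV (EAEdges X) EAScores (EASeeds : Set (EAVoter α n g h)) EAMsg) ↔
    (∃ J : Finset (Fin g), J.card ≤ h ∧ ∀ z : α, ∃ x ∈ J, z ∈ X x) :=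
  edge_addition_positive_deltaMoV_iff_setCover_general n g h hcard hh hhg hL X

end EdgeAdditionSetCover
end
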